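/- arXiv:math/0604321 — 2 statements merged into one kernel-verified Lean document; each statement's English description precedes it below -/
import Mathlib

section
/- The subalgebra S of SO_n-invariant polynomials in R is an integral domain which is integrally closed in its field of fractions (i.e., S is a normal domain). -/
open MvPolynomial Matrix

set_option maxHeartbeats 1000000
set_option synthInstance.maxHeartbeats 400000

/-- The algebra endomorphism of `R = K[x_{i,j}]` induced by the substitution `U ↦ U·A`. -/
noncomputable def sigmaAct (m n : ℕ) {K : Type*} [Field K] (A : Matrix (Fin n) (Fin n) K) :
    MvPolynomial (Fin m × Fin n) K →ₐ[K] MvPolynomial (Fin m × Fin n) K :=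
  MvPolynomial.aeval fun p => ∑ k : Fin n, MvPolynomial.C (A k p.2) * MvPolynomial.X (p.1, k)

/-- The subalgebra of `SO_n`-invariant polynomials. -/
noncomputable def soInvariants (m n : ℕ) (K : Type*) [Field K] :
    Subalgebra K (MvPolynomial (Fin m × Fin n) K) where
  carrier := {f | ∀ A : Matrix (Fin n) (Fin n) K, Aᵀ * A = 1 → A.det = 1 →
    sigmaAct m n A f = f}
  mul_mem' := fun hf hg A hA hd => by rw [_root_.map_mul, hf A hA hd, hg A hA hd]
  add_mem' := fun hf hg A hA hd => by rw [_root_.map_add, hf A hA hd, hg A hA hd]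
  algebraMap_mem' := fun c A hA hd => (sigmaAct m n A).commutes c

section Aux

variable {K : Type*} [Field K] (m n : ℕ)

lemma soInv_isDomain : IsDomain (soInvariants m n K) := inferInstance

lemma soInv_integrallyClosed : IsIntegrallyClosed (soInvariants m n K) := by
  classical
  set R := MvPolynomial (Fin m × Fin n) K with hR
  set S := soInvariants m n K with hS
  have : IsDomain S := inferInstance
  -- the inclusion S → R
  let i : S →+* R := (Subalgebra.val S).toRingHom
  have hi : Function.Injective i := Subtype.val_injective
  -- the map S → Frac R
  let g : S →+* FractionRing R := (algebraMap R (FractionRing R)).comp i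
  have hginj : Function.Injective g :=
    (IsFractionRing.injective R (FractionRing R)).comp hi
  -- lift to φ : Frac S → Frac R
  let φ : FractionRing S →+* FractionRing R := IsFractionRing.lift hginj
  have hφinj : Function.Injective φ := φ.injective
  have hφalg : ∀ s : S, φ (algebraMap S (FractionRing S) s) = algebraMap R (FractionRing R) (i s) :=
    fun s => IsFractionRing.lift_algebraMap hginj s
  rw [isIntegrallyClosed_iff (FractionRing S)]
  intro x hx
  -- φ x is integral over R
  have hint : IsIntegral R (φ x) := by
    obtain ⟨p, hpm, hpe⟩ := hx
    refine ⟨p.map i, hpm.map i, ?_⟩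
    have : Polynomial.eval₂ ((algebraMap R (FractionRing R)).comp i) (φ x) p = 0 := by
      have hcomp : (algebraMap R (FractionRing R)).comp i
          = φ.comp (algebraMap S (FractionRing S)) := by
        ext s; exact (hφalg s).symm
      rw [hcomp, ← Polynomial.hom_eval₂, hpe, map_zero]
    rwa [Polynomial.eval₂_map]
  -- R is integrally closed, get r
  obtain ⟨r, hr⟩ := IsIntegrallyClosed.isIntegral_iff.mp hint
  -- write x = mk' a b
  obtain ⟨⟨a, b⟩, hab⟩ := IsLocalization.mk'_surjective (nonZeroDivisors S) x
  dsimp only at hab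
  have hb0 : (i b : R) ≠ 0 := by
    intro h
    exact nonZeroDivisors.coe_ne_zero b (hi (by simpa using h))
  have hspec : r * i b = i a := by
    apply IsFractionRing.injective R (FractionRing R)
    have := IsLocalization.mk'_spec (FractionRing S) a b
    rw [hab] at this
    have := congrArg φ this
    rw [RingHom.map_mul, hφalg, hφalg, ← hr] at this
    rw [RingHom.map_mul]
    exact this
  -- r is invariant
  have hrS : r ∈ S := by
    intro A hA hd
    have hib : sigmaAct m n A (i b) = i b := b.1.2 A hA hd
    have hia : sigmaAct m n A (i a) = i a := a.2 A hA hd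
    have := congrArg (sigmaAct m n A) hspec
    rw [map_mul (sigmaAct m n A) r (i ↑b), hib, hia, ← hspec] at this
    exact mul_right_cancel₀ hb0 this
  refine ⟨⟨r, hrS⟩, hφinj ?_⟩
  rw [hφalg]; exact hr

end Aux

/-- The ring of `SO_n`-invariants is a normal domain: it is an integral domain which is
integrally closed in its field of fractions. -/
theorem soInvariants_normal_domain {K : Type*} [Field K] [IsAlgClosed K]
    (hK : ringChar K ≠ 2) (m n : ℕ) (hm : 1 ≤ m) (hn : 1 ≤ n) :
    IsDomain (soInvariants m n K) ∧ IsIntegrallyClosed (soInvariants m n K) := by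
  exact ⟨soInv_isDomain m n, soInv_integrallyClosed m n⟩
end

section
/- Every SO_n-invariant polynomial f ∈ R satisfies a monic quadratic equation with O_n-invariant coefficients: there exist O_n-invariant polynomials a, b ∈ R with f² + a·f + b = 0. -/
open MvPolynomial Matrix

/-!
Fix a reflection `D` (orthogonal with `det D = -1`) and put `g = σ_D f`. An orthogonal `A` acts
on an `SO_n`-invariant `f` only through `det A = ±1`, so `σ_A` fixes or swaps `f` and `g`.
Hence `a = -(f + g)` and `b = f g` are `O_n`-invariant, and `f² + a f + b = (f - f)(f - g) = 0`.
-/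

namespace Matrix

variable {ι R : Type*} [Fintype ι] [DecidableEq ι]

theorem transpose_mul_self_mul_eq_one [CommRing R] {A B : Matrix ι ι R}
    (hA : Aᵀ * A = 1) (hB : Bᵀ * B = 1) : (A * B)ᵀ * (A * B) = 1 := by
  rw [transpose_mul, Matrix.mul_assoc, ← Matrix.mul_assoc Aᵀ, hA, Matrix.one_mul, hB]

theorem det_mul_self_eq_one_of_transpose_mul_self [CommRing R] {A : Matrix ι ι R}
    (hA : Aᵀ * A = 1) : A.det * A.det = 1 := by
  simpa [det_mul, det_transpose] using congrArg det hA

theorem det_eq_one_or_neg_one_of_transpose_mul_self [CommRing R] [NoZeroDivisors R]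
    {A : Matrix ι ι R} (hA : Aᵀ * A = 1) : A.det = 1 ∨ A.det = -1 :=
  mul_self_eq_one_iff.mp (det_mul_self_eq_one_of_transpose_mul_self hA)

theorem exists_transpose_mul_self_eq_one_det_eq_neg_one [CommRing R] [Nonempty ι] :
    ∃ D : Matrix ι ι R, Dᵀ * D = 1 ∧ D.det = -1 := by
  obtain ⟨i⟩ := ‹Nonempty ι›
  refine ⟨diagonal (Function.update 1 i (-1)), ?_, ?_⟩
  · rw [diagonal_transpose, diagonal_mul_diagonal, ← diagonal_one]
    congr 1
    ext j
    rcases eq_or_ne j i with rfl | hj <;> simp [*]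
  · rw [det_diagonal, Finset.prod_update_of_mem (Finset.mem_univ i)]
    simp

end Matrix

section Action

variable {m n : ℕ} {K : Type*} [Field K]

theorem sigmaAct_mul (A B : Matrix (Fin n) (Fin n) K) :
    sigmaAct m n (A * B) = (sigmaAct m n A).comp (sigmaAct m n B) := by
  refine MvPolynomial.algHom_ext fun p => ?_
  simp only [AlgHom.comp_apply, sigmaAct, aeval_X, map_sum, map_mul, aeval_C, algebraMap_eq,
    mul_apply, Finset.sum_mul, Finset.mul_sum]
  rw [Finset.sum_comm]
  refine Finset.sum_congr rfl fun k _ => Finset.sum_congr rfl fun l _ => ?_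
  ring

theorem sigmaAct_mul_apply (A B : Matrix (Fin n) (Fin n) K) (f : MvPolynomial (Fin m × Fin n) K) :
    sigmaAct m n (A * B) f = sigmaAct m n A (sigmaAct m n B f) := by
  rw [sigmaAct_mul, AlgHom.comp_apply]

variable {f : MvPolynomial (Fin m × Fin n) K}
  (hf : ∀ A : Matrix (Fin n) (Fin n) K, Aᵀ * A = 1 → A.det = 1 → sigmaAct m n A f = f)
include hf

theorem sigmaAct_eq_of_det_eq {A B : Matrix (Fin n) (Fin n) K} (hA : Aᵀ * A = 1)
    (hB : Bᵀ * B = 1) (hAB : A.det = B.det) : sigmaAct m n A f = sigmaAct m n B f := by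
  have hBBt : B * Bᵀ = 1 := mul_eq_one_comm.mp hB
  have hC : (Bᵀ * A)ᵀ * (Bᵀ * A) = 1 := by
    refine transpose_mul_self_mul_eq_one ?_ hA
    rwa [transpose_transpose]
  have hCdet : (Bᵀ * A).det = 1 := by
    rw [det_mul, det_transpose, ← hAB, det_mul_self_eq_one_of_transpose_mul_self hA]
  calc sigmaAct m n A f = sigmaAct m n (B * (Bᵀ * A)) f := by
        rw [← Matrix.mul_assoc, hBBt, Matrix.one_mul]
    _ = sigmaAct m n B f := by rw [sigmaAct_mul_apply, hf _ hC hCdet]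

theorem sigmaAct_fixes_or_swaps {A D : Matrix (Fin n) (Fin n) K} (hA : Aᵀ * A = 1)
    (hD : Dᵀ * D = 1) (hDdet : D.det = -1) :
    (sigmaAct m n A f = f ∧ sigmaAct m n A (sigmaAct m n D f) = sigmaAct m n D f) ∨
      (sigmaAct m n A f = sigmaAct m n D f ∧ sigmaAct m n A (sigmaAct m n D f) = f) := by
  have hAD := transpose_mul_self_mul_eq_one hA hD
  rw [← sigmaAct_mul_apply]
  rcases det_eq_one_or_neg_one_of_transpose_mul_self hA with hAdet | hAdet
  · refine .inl ⟨hf A hA hAdet, sigmaAct_eq_of_det_eq hf hAD hD ?_⟩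
    rw [det_mul, hAdet, one_mul]
  · refine .inr ⟨sigmaAct_eq_of_det_eq hf hA hD (hAdet.trans hDdet.symm), hf _ hAD ?_⟩
    rw [det_mul, hAdet, hDdet, neg_one_mul, neg_neg]

end Action

theorem soInvariant_quadratic_over_oInvariants_general {K : Type*} [Field K]
    (m n : ℕ) (hn : 1 ≤ n)
    (f : MvPolynomial (Fin m × Fin n) K)
    (hf : ∀ A : Matrix (Fin n) (Fin n) K, Aᵀ * A = 1 → A.det = 1 → sigmaAct m n A f = f) :
    ∃ a b : MvPolynomial (Fin m × Fin n) K,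
      (∀ A : Matrix (Fin n) (Fin n) K, Aᵀ * A = 1 → sigmaAct m n A a = a) ∧
      (∀ A : Matrix (Fin n) (Fin n) K, Aᵀ * A = 1 → sigmaAct m n A b = b) ∧
      f ^ 2 + a * f + b = 0 := by
  have : Nonempty (Fin n) := ⟨⟨0, hn⟩⟩
  obtain ⟨D, hD, hDdet⟩ := exists_transpose_mul_self_eq_one_det_eq_neg_one (R := K) (ι := Fin n)
  refine ⟨-(f + sigmaAct m n D f), f * sigmaAct m n D f, fun A hA => ?_, fun A hA => ?_, by ring⟩
  · rcases sigmaAct_fixes_or_swaps hf hA hD hDdet with ⟨h₁, h₂⟩ | ⟨h₁, h₂⟩ <;>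
      simp only [map_neg, map_add, h₁, h₂, add_comm]
  · rcases sigmaAct_fixes_or_swaps hf hA hD hDdet with ⟨h₁, h₂⟩ | ⟨h₁, h₂⟩ <;>
      simp only [map_mul, h₁, h₂, mul_comm]

/-- Every `SO_n`-invariant polynomial satisfies a monic quadratic equation with
`O_n`-invariant coefficients. -/
theorem soInvariant_quadratic_over_oInvariants {K : Type*} [Field K] [IsAlgClosed K]
    (hK : ringChar K ≠ 2) (m n : ℕ) (hm : 1 ≤ m) (hn : 1 ≤ n)
    (f : MvPolynomial (Fin m × Fin n) K)
    (hf : ∀ A : Matrix (Fin n) (Fin n) K, Aᵀ * A = 1 → A.det = 1 → sigmaAct m n A f = f) :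
    ∃ a b : MvPolynomial (Fin m × Fin n) K,
      (∀ A : Matrix (Fin n) (Fin n) K, Aᵀ * A = 1 → sigmaAct m n A a = a) ∧
      (∀ A : Matrix (Fin n) (Fin n) K, Aᵀ * A = 1 → sigmaAct m n A b = b) ∧
      f ^ 2 + a * f + b = 0 :=
  soInvariant_quadratic_over_oInvariants_general m n hn f hf
end
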